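/- With the Chen-Teo metric functions X, Y, F, G, H as defined (parameters ν, a0,...,a4), the following algebraic identity holds whenever F ≠ 0, Y ≠ 0, and x ≠ y: G*y/(F*Y) + H*x/(F*(x-y)) = (1-ν)*(2*ν*x + (1-ν)*y)/(x-y)^2 - (a1*ν^2 + a2*ν^2*y - a3*(2-ν)*ν*y^2 + a4*(1-ν)^2*y^3)/Y, i.e. the left-hand side minus (1-ν)*(2*ν*x+(1-ν)*y)/(x-y)^2 depends only on y. -/

import Mathlib

/-- The quartic metric function `X` (also giving `Y` when evaluated at `y`). -/
def Xq (a0 a1 a2 a3 a4 t : ℝ) : ℝ := a0 + a1*t + a2*t^2 + a3*t^3 + a4*t^4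

/-- The Chen-Teo metric function `F`. -/
def Fq (a0 a1 a2 a3 a4 x y : ℝ) : ℝ :=
  Xq a0 a1 a2 a3 a4 x * y^2 - x^2 * Xq a0 a1 a2 a3 a4 y

/-- The Chen-Teo metric function `G`. -/
def Gq (ν a0 a1 a2 a3 a4 x y : ℝ) : ℝ :=
  Xq a0 a1 a2 a3 a4 x * (a0*ν^2 + 2*a3*ν*y^3 - a4*y^4 + 2*a4*ν*y^4)
    + (a0 - 2*a0*ν - 2*a1*ν*x - a4*ν^2*x^4) * Xq a0 a1 a2 a3 a4 y

/-- The Chen-Teo metric function `H`. -/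
def Hq (ν a0 a1 a3 a4 x y : ℝ) : ℝ :=
  (ν*x + y)*((ν*x - y)*(a1 - a3*x*y) - 2*(1 - ν)*(a0 - a4*x^2*y^2))

theorem Fq_eq_sub_mul (a0 a1 a2 a3 a4 x y : ℝ) :
    Fq a0 a1 a2 a3 a4 x y
      = (y - x) * (a0*(x + y) + a1*x*y - a3*x^2*y^2 - a4*x^2*y^2*(x + y)) := by
  unfold Fq Xq
  ring

theorem sub_ne_zero_of_Fq_ne_zero {a0 a1 a2 a3 a4 x y : ℝ} (hF : Fq a0 a1 a2 a3 a4 x y ≠ 0) :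
    x - y ≠ 0 := by
  rintro hxy
  rw [Fq_eq_sub_mul, ← neg_sub, hxy, neg_zero, zero_mul] at hF
  exact hF rfl

theorem Gq_mul_add_Hq_mul (ν a0 a1 a2 a3 a4 x y : ℝ) :
    Gq ν a0 a1 a2 a3 a4 x y * y * (x - y)^2
        + Hq ν a0 a1 a3 a4 x y * x * Xq a0 a1 a2 a3 a4 y * (x - y)
      = Fq a0 a1 a2 a3 a4 x y
          * ((1 - ν)*(2*ν*x + (1 - ν)*y) * Xq a0 a1 a2 a3 a4 y
            - (x - y)^2 * (a1*ν^2 + a2*ν^2*y - a3*(2 - ν)*ν*y^2 + a4*(1 - ν)^2*y^3)) := by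
  unfold Gq Hq Fq Xq
  ring

theorem chenTeo_algebraic_identity_x_general (ν a0 a1 a2 a3 a4 x y : ℝ)
    (hF : Fq a0 a1 a2 a3 a4 x y ≠ 0) (hY : Xq a0 a1 a2 a3 a4 y ≠ 0) :
    Gq ν a0 a1 a2 a3 a4 x y * y / (Fq a0 a1 a2 a3 a4 x y * Xq a0 a1 a2 a3 a4 y)
      + Hq ν a0 a1 a3 a4 x y * x / (Fq a0 a1 a2 a3 a4 x y * (x - y))
    = (1 - ν)*(2*ν*x + (1 - ν)*y)/(x - y)^2
      - (a1*ν^2 + a2*ν^2*y - a3*(2 - ν)*ν*y^2 + a4*(1 - ν)^2*y^3)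
          / Xq a0 a1 a2 a3 a4 y := by
  have hxy := sub_ne_zero_of_Fq_ne_zero hF
  rw [div_add_div _ _ (mul_ne_zero hF hY) (mul_ne_zero hF hxy),
    div_sub_div _ _ (pow_ne_zero 2 hxy) hY,
    div_eq_div_iff (mul_ne_zero (mul_ne_zero hF hY) (mul_ne_zero hF hxy))
      (mul_ne_zero (pow_ne_zero 2 hxy) hY)]
  linear_combination Fq a0 a1 a2 a3 a4 x y * Xq a0 a1 a2 a3 a4 y * (x - y)
    * Gq_mul_add_Hq_mul ν a0 a1 a2 a3 a4 x y

theorem chenTeo_algebraic_identity_x (ν a0 a1 a2 a3 a4 x y : ℝ)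
    (hF : Fq a0 a1 a2 a3 a4 x y ≠ 0) (hY : Xq a0 a1 a2 a3 a4 y ≠ 0) (hxy : x ≠ y) :
    Gq ν a0 a1 a2 a3 a4 x y * y / (Fq a0 a1 a2 a3 a4 x y * Xq a0 a1 a2 a3 a4 y)
      + Hq ν a0 a1 a3 a4 x y * x / (Fq a0 a1 a2 a3 a4 x y * (x - y))
    = (1 - ν)*(2*ν*x + (1 - ν)*y)/(x - y)^2
      - (a1*ν^2 + a2*ν^2*y - a3*(2 - ν)*ν*y^2 + a4*(1 - ν)^2*y^3)
          / Xq a0 a1 a2 a3 a4 y :=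
  chenTeo_algebraic_identity_x_general ν a0 a1 a2 a3 a4 x y hF hY
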